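/- Let a(θ) ∈ ℝ^{N²} be defined by V_θ A(a) V_θ† = A(a(θ)), where V_θ acts as U_θ = exp(i(θ/2)c̃·σ) on the two-dimensional range L of A(a) and as the identity on its kernel. Then ‖a(θ)‖ = ‖a‖ for all θ ∈ [0, π], a(0) = a, a(π) = −a, and for θ, θ' ∈ [0,π] one has a(θ)·a(θ') = ‖a‖² cos(θ − θ'). -/

import Mathlib

open Matrix

/-- The Bloch combination `ã·σ` of the three Pauli matrices. -/
noncomputable def pauliCombo (t : Fin 3 → ℝ) : Matrix (Fin 2) (Fin 2) ℂ :=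
  (t 0 : ℂ) • !![0, 1; 1, 0] + (t 1 : ℂ) • !![0, -Complex.I; Complex.I, 0] +
    (t 2 : ℂ) • !![1, 0; 0, -1]

/-- The trace-orthonormal Hermitian basis `{F_k}` built from the Schmidt basis of `H_A`. -/
noncomputable def hermBasis (N : ℕ) (k : Fin N × Fin N) : Matrix (Fin N) (Fin N) ℂ :=
  if k.1 = k.2 then Matrix.single k.1 k.1 1
  else if k.1 < k.2 then
    ((Real.sqrt 2 : ℂ))⁻¹ • (Matrix.single k.1 k.2 1 + Matrix.single k.2 k.1 1)
  else
    (Complex.I * ((Real.sqrt 2 : ℂ))⁻¹) •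
      (Matrix.single k.2 k.1 1 - Matrix.single k.1 k.2 1)

/-- Alice's observable `A(a) = ∑ₖ aₖ Fₖ`. -/
noncomputable def Aop (N : ℕ) (a : Fin N × Fin N → ℝ) : Matrix (Fin N) (Fin N) ℂ :=
  ∑ k, (a k : ℂ) • hermBasis N k

/-!
The map `φ M = ∑ Mᵢⱼ |vᵢ⟩⟨vⱼ|` is a trace-preserving non-unital `*`-homomorphism from `2 × 2`
matrices to operators on `L`. It sends `T = ã·σ` to `A(a)` and `U_θ - 1` to `V_θ - 1`, so
`V_θ A(a) V_θ† = φ (U_θ T U_θ†)` and everything reduces to `2 × 2` algebra. There `T² = C² = 1`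
and `TC = -CT` for `C = c̃·σ`, hence `U_θ = cos(θ/2) + i sin(θ/2) C` and
`U_θ T U_θ† = (cos θ + i sin θ C) T`. As `a ↦ A(a)` is an isometry for `(X, Y) ↦ Tr(XY)`,
`a(θ)·a(θ') = Tr(cos(θ - θ') + i sin(θ - θ') C) = 2 cos(θ - θ')`, and at `θ = π` the factor
`cos θ + i sin θ C` is `-1`.
-/

section InvolutionCis

variable {A : Type*} [Ring A] [Algebra ℂ A]

noncomputable def involutionCis (C : A) (ψ : ℝ) : A :=
  (Real.cos ψ : ℂ) • 1 + (Complex.I * Real.sin ψ) • C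

lemma involutionCis_zero (C : A) : involutionCis C 0 = 1 := by
  simp [involutionCis]

lemma involutionCis_pi (C : A) : involutionCis C Real.pi = -1 := by
  simp [involutionCis]

lemma involutionCis_add {C : A} (hC : C * C = 1) (ψ φ : ℝ) :
    involutionCis C (ψ + φ) = involutionCis C ψ * involutionCis C φ := by
  simp only [involutionCis, add_mul, mul_add, smul_mul_smul, one_mul, mul_one, hC,
    Real.cos_add, Real.sin_add]
  match_scalars
  · ring_nf; simp only [Complex.I_sq]; ring
  · ring

lemma mul_involutionCis_of_anticomm {C T : A} (hTC : T * C = -(C * T)) (ψ : ℝ) :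
    T * involutionCis C ψ = involutionCis C (-ψ) * T := by
  simp only [involutionCis, mul_add, add_mul, mul_smul_comm, smul_mul_assoc, hTC,
    Real.cos_neg, Real.sin_neg, one_mul, mul_one]
  push_cast
  simp only [mul_neg, neg_smul, smul_neg]

lemma involutionCis_mul_mul_involutionCis_mul {C T : A} (hC : C * C = 1) (hT : T * T = 1)
    (hTC : T * C = -(C * T)) (ψ φ : ℝ) :
    involutionCis C ψ * T * (involutionCis C φ * T) = involutionCis C (ψ - φ) := by
  rw [mul_assoc, ← mul_assoc T, mul_involutionCis_of_anticomm hTC, mul_assoc, hT, mul_one,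
    ← involutionCis_add hC, sub_eq_add_neg]

lemma star_involutionCis [StarRing A] [StarModule ℂ A] {C : A} (hC : star C = C) (ψ : ℝ) :
    star (involutionCis C ψ) = involutionCis C (-ψ) := by
  simp only [involutionCis, star_add, star_smul, star_one, hC, Real.cos_neg, Real.sin_neg,
    star_mul', Complex.star_def, Complex.conj_I, Complex.conj_ofReal]
  push_cast
  simp only [neg_mul, mul_neg]

lemma involutionCis_mul_mul_star [StarRing A] [StarModule ℂ A] {C T : A} (hC : C * C = 1)
    (hCH : star C = C) (hTC : T * C = -(C * T)) (ψ : ℝ) :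
    involutionCis C ψ * T * star (involutionCis C ψ) = involutionCis C (2 * ψ) * T := by
  rw [star_involutionCis hCH, mul_assoc, mul_involutionCis_of_anticomm hTC, neg_neg,
    ← mul_assoc, ← involutionCis_add hC, two_mul]

lemma exp_I_smul_eq_involutionCis [TopologicalSpace A] [IsTopologicalRing A] [T2Space A]
    [ContinuousSMul ℂ A] {C : A} (hC : C * C = 1) (ψ : ℝ) :
    NormedSpace.exp ((Complex.I * ψ) • C) = involutionCis C ψ := by
  have heven : HasSum
      (fun k : ℕ => ((Nat.factorial (2 * k) : ℂ))⁻¹ • ((Complex.I * ψ) • C) ^ (2 * k))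
      ((Real.cos ψ : ℂ) • (1 : A)) := by
    have h := (Complex.hasSum_cos' (ψ : ℂ)).smul_const (1 : A)
    rw [← Complex.ofReal_cos] at h
    convert h using 2 with k
    rw [smul_pow, pow_mul C, sq, hC, one_pow, smul_smul]
    congr 1
    ring
  have hodd : HasSum
      (fun k : ℕ => ((Nat.factorial (2 * k + 1) : ℂ))⁻¹ • ((Complex.I * ψ) • C) ^ (2 * k + 1))
      ((Complex.I * Real.sin ψ) • C) := by
    have h := ((Complex.hasSum_sin' (ψ : ℂ)).mul_right Complex.I).smul_const C
    rw [← Complex.ofReal_sin] at h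
    convert h using 2 with k
    · rw [smul_pow, pow_succ C, pow_mul C, sq, hC, one_pow, one_mul, smul_smul,
        div_mul_cancel₀ _ Complex.I_ne_zero]
      congr 1
      ring
    · exact mul_comm _ _
  rw [NormedSpace.exp_eq_tsum ℂ]
  exact (HasSum.even_add_odd
    (f := fun n : ℕ => ((Nat.factorial n : ℂ))⁻¹ • ((Complex.I * ψ) • C) ^ n) heven hodd).tsum_eq

lemma trace_involutionCis {n : Type*} [Fintype n] [DecidableEq n] {C : Matrix n n ℂ}
    (hC : C.trace = 0) (ψ : ℝ) :
    (involutionCis C ψ).trace = Fintype.card n * Real.cos ψ := by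
  simp [involutionCis, hC, mul_comm]

end InvolutionCis

lemma map_conj_one_add {F A B : Type*} [Ring A] [StarRing A] [Ring B] [StarRing B]
    [FunLike F A B] [NonUnitalRingHomClass F A B] [StarHomClass F A B] (f : F) (X Y : A) :
    f ((1 + X) * Y * star (1 + X)) = (1 + f X) * f Y * star (1 + f X) := by
  have h : (1 + X) * Y * star (1 + X) = Y + X * Y + Y * star X + X * Y * star X := by
    rw [star_add, star_one]
    noncomm_ring
  rw [h, star_add, star_one, ← map_star]
  simp only [map_add, map_mul]
  noncomm_ring

section OrthonormalEmbedding

variable {ι n : Type*} [Fintype n] [DecidableEq ι] {v : ι → EuclideanSpace ℂ n}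

lemma star_dotProduct_of_orthonormal (hv : Orthonormal ℂ v) (i j : ι) :
    star (v i) ⬝ᵥ v j = if i = j then 1 else 0 := by
  rw [dotProduct_comm, ← EuclideanSpace.inner_eq_star_dotProduct, orthonormal_iff_ite.mp hv]

lemma vecMulVec_mul_vecMulVec_of_orthonormal (hv : Orthonormal ℂ v) (i j k l : ι) :
    vecMulVec (v i) (star (v j)) * vecMulVec (v k) (star (v l))
      = if j = k then vecMulVec (v i) (star (v l)) else 0 := by
  rw [vecMulVec_mul_vecMulVec, star_dotProduct_of_orthonormal hv]
  split_ifs <;> simp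

variable [Fintype ι]

noncomputable def Orthonormal.matrixEmbedding (hv : Orthonormal ℂ v) :
    Matrix ι ι ℂ →⋆ₙₐ[ℂ] Matrix n n ℂ where
  toFun M := ∑ i, ∑ j, M i j • vecMulVec (v i) (star (v j))
  map_smul' c M := by
    simp only [Matrix.smul_apply, smul_eq_mul, mul_smul, Finset.smul_sum, MonoidHom.id_apply]
  map_zero' := by simp
  map_add' M P := by simp only [Matrix.add_apply, add_smul, Finset.sum_add_distrib]
  map_mul' M P := by
    simp only [Finset.sum_mul_sum, smul_mul_smul, vecMulVec_mul_vecMulVec_of_orthonormal hv,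
      smul_ite, smul_zero, Finset.sum_ite_irrel, Finset.sum_const_zero, Finset.sum_ite_eq',
      Finset.mem_univ, if_true, mul_apply, Finset.sum_smul]
    exact Finset.sum_congr rfl fun i _ => Finset.sum_comm
  map_star' M := by
    simp only [star_sum, star_smul, star_eq_conjTranspose, conjTranspose_vecMulVec, star_star,
      conjTranspose_apply]
    exact Finset.sum_comm

lemma Orthonormal.matrixEmbedding_apply (hv : Orthonormal ℂ v) (M : Matrix ι ι ℂ) :
    hv.matrixEmbedding M = ∑ i, ∑ j, M i j • vecMulVec (v i) (star (v j)) :=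
  rfl

lemma Orthonormal.trace_matrixEmbedding (hv : Orthonormal ℂ v) (M : Matrix ι ι ℂ) :
    (hv.matrixEmbedding M).trace = M.trace := by
  have hdot (i j : ι) : v i ⬝ᵥ star (v j) = if j = i then 1 else 0 := by
    rw [dotProduct_comm, star_dotProduct_of_orthonormal hv]
  simp only [hv.matrixEmbedding_apply, trace_sum, trace_smul, trace_vecMulVec, hdot, smul_eq_mul,
    mul_ite, mul_one, mul_zero, Finset.sum_ite_eq', Finset.mem_univ, if_true]
  rfl

end OrthonormalEmbedding

lemma pauliCombo_mul_add_mul (s u : Fin 3 → ℝ) :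
    pauliCombo s * pauliCombo u + pauliCombo u * pauliCombo s
      = ((2 * ∑ i, s i * u i : ℝ) : ℂ) • 1 := by
  ext i j
  fin_cases i <;> fin_cases j <;>
    · simp [pauliCombo, Fin.sum_univ_succ, one_apply, Complex.ext_iff]
      constructor <;> ring

lemma pauliCombo_mul_self {s : Fin 3 → ℝ} (hs : ∑ i, s i ^ 2 = 1) :
    pauliCombo s * pauliCombo s = 1 := by
  have h : (2 : ℂ) • (pauliCombo s * pauliCombo s) = (2 : ℂ) • 1 := by
    rw [two_smul, pauliCombo_mul_add_mul]
    simp [← sq, hs]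
  exact smul_right_injective _ two_ne_zero h

lemma pauliCombo_mul_eq_neg_mul_of_orthogonal {s u : Fin 3 → ℝ} (hsu : ∑ i, s i * u i = 0) :
    pauliCombo s * pauliCombo u = -(pauliCombo u * pauliCombo s) :=
  eq_neg_of_add_eq_zero_left (by simp [pauliCombo_mul_add_mul, hsu])

lemma trace_pauliCombo (s : Fin 3 → ℝ) : (pauliCombo s).trace = 0 := by
  simp [pauliCombo, trace, Fin.sum_univ_two]

lemma conjTranspose_pauliCombo (s : Fin 3 → ℝ) : (pauliCombo s)ᴴ = pauliCombo s := by
  ext i j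
  fin_cases i <;> fin_cases j <;> simp [pauliCombo]

lemma trace_hermBasis_mul_hermBasis {N : ℕ} (k l : Fin N × Fin N) :
    (hermBasis N k * hermBasis N l).trace = if k = l then 1 else 0 := by
  obtain ⟨i, j⟩ := k
  obtain ⟨p, q⟩ := l
  have hsqrt : ((Real.sqrt 2 : ℂ))⁻¹ ^ 2 = 2⁻¹ := by
    rw [inv_pow, ← Complex.ofReal_pow, Real.sq_sqrt zero_le_two, Complex.ofReal_ofNat]
  simp only [hermBasis, Prod.mk.injEq]
  split_ifs <;>
    simp only [smul_mul_assoc, add_mul, sub_mul, trace_smul, trace_add, trace_sub,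
      trace_single_mul, Matrix.smul_apply, Matrix.add_apply, Matrix.sub_apply, single_apply,
      smul_eq_mul] <;>
    split_ifs <;> simp only [Fin.ext_iff, Fin.lt_def] at * <;>
    first | omega | (ring_nf <;> simp [hsqrt])

lemma trace_Aop_mul_Aop {N : ℕ} (x y : Fin N × Fin N → ℝ) :
    (Aop N x * Aop N y).trace = ((∑ k, x k * y k : ℝ) : ℂ) := by
  simp only [Aop, Finset.sum_mul_sum, smul_mul_smul, trace_sum, trace_smul,
    trace_hermBasis_mul_hermBasis, smul_eq_mul, mul_ite, mul_one, mul_zero, Finset.sum_ite_eq,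
    Finset.mem_univ, if_true]
  push_cast
  rfl

lemma Aop_injective (N : ℕ) : Function.Injective (Aop N) := by
  intro x y h
  have hxx := trace_Aop_mul_Aop x x
  have hxy := trace_Aop_mul_Aop x y
  have hyy := trace_Aop_mul_Aop y y
  rw [h] at hxx hxy
  have hsq : ∑ k, (x k - y k) ^ 2 = 0 := by
    have e1 : ∑ k, x k * x k = ∑ k, y k * y k := by exact_mod_cast hxx.symm.trans hyy
    have e2 : ∑ k, x k * y k = ∑ k, y k * y k := by exact_mod_cast hxy.symm.trans hyy
    have hexpand : ∑ k, (x k - y k) ^ 2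
        = ∑ k, x k * x k - 2 * ∑ k, x k * y k + ∑ k, y k * y k := by
      rw [Finset.mul_sum, ← Finset.sum_sub_distrib, ← Finset.sum_add_distrib]
      exact Finset.sum_congr rfl fun k _ => by ring
    rw [hexpand, e1, e2]
    ring
  funext k
  have hk := (Finset.sum_eq_zero_iff_of_nonneg fun k _ => sq_nonneg (x k - y k)).mp hsq k
    (Finset.mem_univ k)
  exact sub_eq_zero.mp (pow_eq_zero_iff two_ne_zero |>.mp hk)

lemma Aop_neg (N : ℕ) (x : Fin N × Fin N → ℝ) : Aop N (-x) = -Aop N x := by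
  simp [Aop, ← Finset.sum_neg_distrib]

theorem curve_of_rotated_observable_general (N : ℕ)
    (a : EuclideanSpace ℝ (Fin N × Fin N))
    (v : Fin 2 → EuclideanSpace ℂ (Fin N)) (hv : Orthonormal ℂ v)
    (t c : Fin 3 → ℝ) (ht : ∑ i, (t i) ^ 2 = 1) (hc : ∑ i, (c i) ^ 2 = 1)
    (htc : ∑ i, t i * c i = 0)
    (hA : Aop N a = ∑ i, ∑ j, pauliCombo t i j • Matrix.vecMulVec (v i) (star (v j)))
    (U : ℝ → Matrix (Fin 2) (Fin 2) ℂ)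
    (hU : ∀ θ, U θ = NormedSpace.exp ((Complex.I * (θ / 2 : ℝ)) • pauliCombo c))
    (V : ℝ → Matrix (Fin N) (Fin N) ℂ)
    (hV : ∀ θ, V θ = 1 + ∑ i, ∑ j,
      (U θ i j - (1 : Matrix (Fin 2) (Fin 2) ℂ) i j) • Matrix.vecMulVec (v i) (star (v j)))
    (aθ : ℝ → EuclideanSpace ℝ (Fin N × Fin N))
    (hcurve : ∀ θ, Aop N (aθ θ) = V θ * Aop N a * (V θ)ᴴ) :
    (∀ θ ∈ Set.Icc 0 Real.pi, ‖aθ θ‖ = ‖a‖) ∧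
    aθ 0 = a ∧ aθ Real.pi = -a ∧
    (∀ θ ∈ Set.Icc 0 Real.pi, ∀ θ' ∈ Set.Icc 0 Real.pi,
      ∑ k, aθ θ k * aθ θ' k = ‖a‖ ^ 2 * Real.cos (θ - θ')) := by
  set φ := hv.matrixEmbedding
  have hC2 := pauliCombo_mul_self hc
  have hTC := pauliCombo_mul_eq_neg_mul_of_orthogonal htc
  have hAop (θ : ℝ) : Aop N (aθ θ) = φ (involutionCis (pauliCombo c) θ * pauliCombo t) := by
    rw [hcurve, show V θ = 1 + φ (U θ - 1) from hV θ, show Aop N a = φ (pauliCombo t) from hA,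
      ← star_eq_conjTranspose, ← map_conj_one_add, add_sub_cancel, hU,
      exp_I_smul_eq_involutionCis hC2,
      involutionCis_mul_mul_star hC2 (conjTranspose_pauliCombo c) hTC,
      mul_div_cancel₀ _ two_ne_zero]
  have hgram (θ θ' : ℝ) : ∑ k, aθ θ k * aθ θ' k = 2 * Real.cos (θ - θ') := by
    have h := trace_Aop_mul_Aop (aθ θ) (aθ θ')
    rw [hAop, hAop, ← map_mul, hv.trace_matrixEmbedding,
      involutionCis_mul_mul_involutionCis_mul hC2 (pauliCombo_mul_self ht) hTC,
      trace_involutionCis (trace_pauliCombo c)] at h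
    exact_mod_cast h.symm
  have h0 : aθ 0 = a := WithLp.ofLp_injective 2 <| Aop_injective N <| by
    rw [hAop, involutionCis_zero, one_mul, hA]
    rfl
  have hnorm_sq (θ : ℝ) : ‖aθ θ‖ ^ 2 = 2 := by
    rw [EuclideanSpace.real_norm_sq_eq]
    simpa [sq] using hgram θ θ
  refine ⟨fun θ _ => ?_, h0, ?_, fun θ _ θ' _ => ?_⟩
  · rw [← sq_eq_sq₀ (norm_nonneg _) (norm_nonneg _), ← h0, hnorm_sq, hnorm_sq]
  · refine WithLp.ofLp_injective 2 (Aop_injective N ?_)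
    rw [hAop, involutionCis_pi, neg_one_mul, map_neg, WithLp.ofLp_neg, Aop_neg, hA]
    rfl
  · rw [hgram, ← h0, hnorm_sq]

/-- The curve `a(θ)` of coefficient vectors defined by `V_θ A(a) V_θ† = A(a(θ))`, where
`V_θ` acts as `U_θ = exp(i(θ/2) c̃·σ)` on the two-dimensional range `L` of `A(a)`
(spanned by the orthonormal pair `v₀, v₁`, on which `A(a)` has unit Bloch form `ã·σ`)
and as the identity on its kernel, satisfies: `‖a(θ)‖ = ‖a‖` on `[0, π]`, `a(0) = a`,
`a(π) = −a`, and `a(θ)·a(θ') = ‖a‖² cos(θ − θ')` for `θ, θ' ∈ [0, π]`. -/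
theorem curve_of_rotated_observable (N : ℕ) (hN : 2 ≤ N)
    (a : EuclideanSpace ℝ (Fin N × Fin N))
    (v : Fin 2 → EuclideanSpace ℂ (Fin N)) (hv : Orthonormal ℂ v)
    (t c : Fin 3 → ℝ) (ht : ∑ i, (t i) ^ 2 = 1) (hc : ∑ i, (c i) ^ 2 = 1)
    (htc : ∑ i, t i * c i = 0)
    (hA : Aop N a = ∑ i, ∑ j, pauliCombo t i j • Matrix.vecMulVec (v i) (star (v j)))
    (U : ℝ → Matrix (Fin 2) (Fin 2) ℂ)
    (hU : ∀ θ, U θ = NormedSpace.exp ((Complex.I * (θ / 2 : ℝ)) • pauliCombo c))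
    (V : ℝ → Matrix (Fin N) (Fin N) ℂ)
    (hV : ∀ θ, V θ = 1 + ∑ i, ∑ j,
      (U θ i j - (1 : Matrix (Fin 2) (Fin 2) ℂ) i j) • Matrix.vecMulVec (v i) (star (v j)))
    (aθ : ℝ → EuclideanSpace ℝ (Fin N × Fin N))
    (hcurve : ∀ θ, Aop N (aθ θ) = V θ * Aop N a * (V θ)ᴴ) :
    (∀ θ ∈ Set.Icc 0 Real.pi, ‖aθ θ‖ = ‖a‖) ∧
    aθ 0 = a ∧ aθ Real.pi = -a ∧
    (∀ θ ∈ Set.Icc 0 Real.pi, ∀ θ' ∈ Set.Icc 0 Real.pi,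
      ∑ k, aθ θ k * aθ θ' k = ‖a‖ ^ 2 * Real.cos (θ - θ')) :=
  curve_of_rotated_observable_general N a v hv t c ht hc htc hA U hU V hV aθ hcurve
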